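/- arXiv:2307.09289 — 3 statements merged into one kernel-verified Lean document; each statement's English description precedes it below -/
import Mathlib

section
/- Curried Church encoding of ℕ: the set of paranatural endotransformations of the hom difunctor on Set — i.e., families φ_X : (X → X) → (X → X) such that for every f : X → Y, u : X → X, v : Y → Y with f ∘ u = v ∘ f, one has f ∘ φ_X(u) = φ_Y(v) ∘ f — is in bijection with ℕ, via n ↦ (λ u. uⁿ). -/
universe u

/-- Paranatural endotransformations of the hom difunctor on `Set`: families
`φ_X : (X → X) → (X → X)` such that whenever `f` intertwines `u` and `v`, it also
intertwines `φ_X u` and `φ_Y v`. -/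
def HomParanat : Type (u + 1) :=
  {φ : ∀ X : Type u, (X → X) → (X → X) //
    ∀ (X Y : Type u) (f : X → Y) (u : X → X) (v : Y → Y),
      f ∘ u = v ∘ f → f ∘ φ X u = φ Y v ∘ f}

/-- `n ↦ (u ↦ u^[n])` is a paranatural endotransformation of the hom difunctor. -/
theorem iterate_homParanat (n : ℕ) :
    ∀ (X Y : Type u) (f : X → Y) (u : X → X) (v : Y → Y),
      f ∘ u = v ∘ f → f ∘ u^[n] = v^[n] ∘ f := by
  intro X Y f u v h
  have hsc : Function.Semiconj f u v := fun x => congrFun h x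
  exact (hsc.iterate_right n).comp_eq

/-- Successor on `ULift ℕ`. -/
def uSucc : ULift.{u} ℕ → ULift.{u} ℕ := fun k => ⟨k.down + 1⟩

theorem uSucc_iterate (n : ℕ) (k : ULift.{u} ℕ) :
    uSucc^[n] k = ⟨k.down + n⟩ := by
  induction n with
  | zero => simp
  | succ m ih =>
      rw [Function.iterate_succ_apply', ih]
      rfl

theorem homParanat_eval (φ : HomParanat.{u}) (X : Type u) (u : X → X) (x : X) :
    φ.1 X u x = u^[(φ.1 (ULift ℕ) uSucc ⟨0⟩).down] x := by
  have h : (fun k : ULift.{u} ℕ => u^[k.down] x) ∘ uSucc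
      = u ∘ (fun k : ULift.{u} ℕ => u^[k.down] x) := by
    funext k
    simp [uSucc, Function.iterate_succ_apply']
  have := congrFun (φ.2 (ULift ℕ) X (fun k => u^[k.down] x) uSucc u h) ⟨0⟩
  simpa using this.symm

/-- Curried Church encoding of `ℕ`: paranatural endotransformations of the hom
difunctor on `Set` are in bijection with `ℕ`, via `n ↦ (u ↦ uⁿ)`. -/
theorem homParanat_bijective :
    Function.Bijective (fun n : ℕ =>
      (⟨fun _ u => u^[n], fun X Y f u v h => iterate_homParanat n X Y f u v h⟩ :
        HomParanat.{u})) := by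
  constructor
  · intro m n h
    have := congrFun (congrFun (congrArg (fun φ : HomParanat.{u} => φ.1 (ULift ℕ))
      h) uSucc) ⟨0⟩
    simp only at this
    rw [uSucc_iterate, uSucc_iterate] at this
    simpa using congrArg ULift.down this
  · intro φ
    refine ⟨(φ.1 (ULift ℕ) uSucc ⟨0⟩).down, ?_⟩
    apply Subtype.ext
    funext X u x
    exact (homParanat_eval φ X u x).symm
end

section
/- Structural ends give initial algebras: let T : Set → Set be a functor, and suppose the set μ_T of families φ assigning to each T-algebra (X, u : T X → X) an element φ_{(X,u)} ∈ X, commuting with all T-algebra homomorphisms, exists as a set. Then μ_T carries a T-algebra structure in_T(ω) := λ (X,u). u(T(λ φ. φ_{(X,u)})(ω)), and (μ_T, in_T) is an initial T-algebra: for every T-algebra (X,u) the map φ ↦ φ_{(X,u)} is the unique T-algebra homomorphism μ_T → X. -/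
open CategoryTheory

universe u

/-!
Folding the end along a homomorphism is the wedge condition itself, so `fold_u` is a
homomorphism `(μ, in_T) → (X, u)` as soon as `in_T ω` is again a wedge, which follows from
functoriality of `T`. Applying the wedge condition of `φ` to the homomorphism
`fold_v : (μ, in_T) → (Y, v)` gives `fold_v (φ_{(μ, in_T)}) = φ_{(Y,v)}`, i.e. folding over
`(μ, in_T)` is the identity; a homomorphism `g : (μ, in_T) → (X, u)` then satisfies
`g φ = g (φ_{(μ, in_T)}) = φ_{(X,u)}`.
-/

namespace StructuralEnd

variable {T : Type u ⥤ Type u}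

abbrev Wedge (T : Type u ⥤ Type u) : Type (u + 1) :=
  {φ : ∀ (X : Type u) (_ : T.obj X → X), X //
    ∀ (X Y : Type u) (u : T.obj X → X) (v : T.obj Y → Y) (f : X → Y),
      f ∘ u = v ∘ T.map (TypeCat.ofHom f) → f (φ X u) = φ Y v}

variable {μ : Type u} (e : μ ≃ Wedge T)

def fold (X : Type u) (u : T.obj X → X) : μ → X := fun m => (e m).1 X u

theorem comp_fold_of_hom {X Y : Type u} {u : T.obj X → X} {v : T.obj Y → Y} {f : X → Y}
    (hf : f ∘ u = v ∘ T.map (TypeCat.ofHom f)) : f ∘ fold e X u = fold e Y v :=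
  funext fun m => (e m).2 X Y u v f hf

def inWedge (ω : T.obj μ) : Wedge T :=
  ⟨fun X u => u (T.map (TypeCat.ofHom (fold e X u)) ω), fun X Y u v f hf => by
    calc f (u (T.map (TypeCat.ofHom (fold e X u)) ω))
        = v (T.map (TypeCat.ofHom f) (T.map (TypeCat.ofHom (fold e X u)) ω)) :=
          congrFun hf _
      _ = v (T.map (TypeCat.ofHom (f ∘ fold e X u)) ω) :=
          congrArg v (T.map_comp_apply _ _ ω).symm
      _ = v (T.map (TypeCat.ofHom (fold e Y v)) ω) := by rw [comp_fold_of_hom e hf]⟩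

def inT (ω : T.obj μ) : μ := e.symm (inWedge e ω)

theorem fold_inT (X : Type u) (u : T.obj X → X) (ω : T.obj μ) :
    fold e X u (inT e ω) = u (T.map (TypeCat.ofHom (fold e X u)) ω) := by
  simp only [fold, inT, Equiv.apply_symm_apply, inWedge]

theorem fold_comp_inT (X : Type u) (u : T.obj X → X) :
    fold e X u ∘ inT e = u ∘ T.map (TypeCat.ofHom (fold e X u)) :=
  funext (fold_inT e X u)

theorem fold_self_apply (m : μ) : fold e μ (inT e) m = m :=
  e.injective <| Subtype.ext <| funext₂ fun Y v => (e m).2 μ Y (inT e) v _ (fold_comp_inT e Y v)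

theorem eq_fold_of_hom {X : Type u} {u : T.obj X → X} {g : μ → X}
    (hg : g ∘ inT e = u ∘ T.map (TypeCat.ofHom g)) : g = fold e X u :=
  funext fun m => calc
    g m = g (fold e μ (inT e) m) := by rw [fold_self_apply]
    _ = fold e X u m := (e m).2 μ X (inT e) u g hg

end StructuralEnd

open StructuralEnd in
/-- Structural ends give initial algebras: if the set of wedges over the `T`-algebraic
difunctor exists as a (small) set `μ` (witnessed by the equivalence `e`), then `μ`
carries a `T`-algebra structure `in_T(ω) = λ (X,u). u(T(fold_u)(ω))` making it an
initial `T`-algebra: for every `T`-algebra `(X,u)`, `fold_u := φ ↦ φ_{(X,u)}` is the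
unique `T`-algebra homomorphism `μ → X`. -/
theorem structuralEnd_initial_algebra (T : Type u ⥤ Type u) (μ : Type u)
    (e : μ ≃ {φ : ∀ (X : Type u) (_ : T.obj X → X), X //
      ∀ (X Y : Type u) (u : T.obj X → X) (v : T.obj Y → Y) (f : X → Y),
        f ∘ u = v ∘ T.map (TypeCat.ofHom f) → f (φ X u) = φ Y v}) :
    ∃ inT : T.obj μ → μ,
      (∀ (ω : T.obj μ) (X : Type u) (u : T.obj X → X),
        (e (inT ω)).1 X u = u (T.map (TypeCat.ofHom (fun m => (e m).1 X u)) ω)) ∧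
      (∀ (X : Type u) (u : T.obj X → X),
        ((fun m => (e m).1 X u) ∘ inT = u ∘ T.map (TypeCat.ofHom (fun m => (e m).1 X u))) ∧
        (∀ g : μ → X, g ∘ inT = u ∘ T.map (TypeCat.ofHom g) → g = fun m => (e m).1 X u)) :=
  ⟨inT e, fun ω X u => fold_inT e X u ω,
    fun X u => ⟨fold_comp_inT e X u, fun _ hg => eq_fold_of_hom e hg⟩⟩
end

section
/- Uustalu's Yoneda-like lemma for initial algebras: if T : Set → Set has an initial algebra (μT, in), then for any functor F : Set → Set, the set of paranatural transformations from the difunctor (X,Y) ↦ (T X → Y) to the difunctor (X,Y) ↦ F Y is in bijection with F(μT). -/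
/-!
A paranatural `φ` is determined by its component at the initial algebra: the fold
`μT → X` is a homomorphism from `(μT, inT)` to `(X, u)`, so paranaturality forces
`φ_X u = F(fold_u)(φ_{μT} inT)`. Conversely this formula defines a paranatural family for
every `e ∈ F(μT)`, because post-composing a fold with a homomorphism is again a fold, and it
returns `e` at `(μT, inT)` because the fold of `inT` is the identity.
-/

open CategoryTheory

universe u

namespace TypeAlgebra

variable {T : Type u ⥤ Type u}

def IsHom {X Y : Type u} (u : T.obj X → X) (v : T.obj Y → Y) (f : X → Y) : Prop :=
  f ∘ u = v ∘ T.map (↾f)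

theorem isHom_id {X : Type u} (u : T.obj X → X) : IsHom u u id := by
  funext x
  exact congrArg u (T.map_id_apply X x).symm

theorem IsHom.comp {X Y Z : Type u} {u : T.obj X → X} {v : T.obj Y → Y} {w : T.obj Z → Z}
    {g : Y → Z} {f : X → Y} (hg : IsHom v w g) (hf : IsHom u v f) : IsHom u w (g ∘ f) := by
  funext x
  calc g (f (u x)) = g (v (T.map (↾f) x)) := congrArg g (congrFun hf x)
    _ = w (T.map (↾g) (T.map (↾f) x)) := congrFun hg _
    _ = w (T.map (↾(g ∘ f)) x) := congrArg w (T.map_comp_apply (↾f) (↾g) x).symm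

variable {μT : Type u} {inT : T.obj μT → μT}
  (hinit : ∀ (X : Type u) (u : T.obj X → X), ∃! f : μT → X, IsHom inT u f)

noncomputable def fold {X : Type u} (u : T.obj X → X) : μT → X :=
  (hinit X u).choose

theorem isHom_fold {X : Type u} (u : T.obj X → X) : IsHom inT u (fold hinit u) :=
  (hinit X u).choose_spec.1

theorem eq_fold_of_isHom {X : Type u} {u : T.obj X → X} {f : μT → X} (hf : IsHom inT u f) :
    f = fold hinit u :=
  (hinit X u).choose_spec.2 f hf

theorem fold_self : fold hinit inT = id :=
  (eq_fold_of_isHom hinit (isHom_id inT)).symm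

theorem IsHom.comp_fold {X Y : Type u} {u : T.obj X → X} {v : T.obj Y → Y} {f : X → Y}
    (hf : IsHom u v f) : f ∘ fold hinit u = fold hinit v :=
  eq_fold_of_isHom hinit (hf.comp (isHom_fold hinit u))

variable (F : Type u ⥤ Type u)

def IsParanatural (φ : ∀ X : Type u, (T.obj X → X) → F.obj X) : Prop :=
  ∀ (X Y : Type u) (u : T.obj X → X) (v : T.obj Y → Y) (f : X → Y),
    IsHom u v f → F.map (↾f) (φ X u) = φ Y v

theorem IsParanatural.eq_map_fold {φ : ∀ X : Type u, (T.obj X → X) → F.obj X}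
    (hφ : IsParanatural F φ) (X : Type u) (u : T.obj X → X) :
    φ X u = F.map (↾(fold hinit u)) (φ μT inT) :=
  (hφ μT X inT u _ (isHom_fold hinit u)).symm

noncomputable def ofInitial (e : F.obj μT) (X : Type u) (u : T.obj X → X) : F.obj X :=
  F.map (↾(fold hinit u)) e

theorem isParanatural_ofInitial (e : F.obj μT) : IsParanatural F (ofInitial hinit F e) := by
  intro X Y u v f hf
  rw [ofInitial, ofInitial, ← hf.comp_fold hinit]
  exact (F.map_comp_apply (↾(fold hinit u)) (↾f) e).symm

theorem ofInitial_self (e : F.obj μT) : ofInitial hinit F e μT inT = e := by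
  rw [ofInitial, fold_self]
  exact F.map_id_apply μT e

end TypeAlgebra

/-- Uustalu's Yoneda-like lemma for initial algebras: if `(μT, inT)` is an initial
`T`-algebra, then paranatural transformations from the `T`-algebraic difunctor
`(X,Y) ↦ (T X → Y)` to `(X,Y) ↦ F Y` are in bijection with `F(μT)`, via
`φ ↦ φ_{μT}(inT)`. -/
theorem uustalu_yoneda (T F : Type u ⥤ Type u) (μT : Type u) (inT : T.obj μT → μT)
    (hinit : ∀ (X : Type u) (u : T.obj X → X),
      ∃! f : μT → X, f ∘ inT = u ∘ T.map (↾f)) :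
    Function.Bijective
      (fun φ : {φ : ∀ X : Type u, (T.obj X → X) → F.obj X //
          ∀ (X Y : Type u) (u : T.obj X → X) (v : T.obj Y → Y) (f : X → Y),
            f ∘ u = v ∘ T.map (↾f) → F.map (↾f) (φ X u) = φ Y v} =>
        φ.1 μT inT) := by
  refine Function.bijective_iff_has_inverse.mpr
    ⟨fun e => ⟨TypeAlgebra.ofInitial hinit F e, TypeAlgebra.isParanatural_ofInitial hinit F e⟩,
      ?_, ?_⟩
  · rintro ⟨φ, hφ⟩
    ext X u
    exact (TypeAlgebra.IsParanatural.eq_map_fold hinit F hφ X u).symm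
  · exact TypeAlgebra.ofInitial_self hinit F
end
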